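/- arXiv:2412.18018 — 2 statements merged into one kernel-verified Lean document; each statement's English description precedes it below -/
import Mathlib

section
/- For every N ≥ 2, every KC-PMI P on N parties, every subsystem Y whose β-set is essential or partial, and every MI instance m ∈ β(Y): (i) if β(Y) is partial, then m ∈ P if and only if m splits no element of Max(pos_<(Y)); (ii) if β(Y) is essential, then m ∈ A if and only if m splits no element of Max(pos_<(Y)). -/
namespace HEC

/-- The parties `⟦N⟧ = {0,1,…,N}`, where `0` is the purifier. -/
abbrev Party (N : ℕ) := Fin (N + 1)

/-- A collection of parties. -/
abbrev PSet (N : ℕ) := Finset (Party N)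

/-- MI instances: unordered pairs of subsets of parties. -/
abbrev MI (N : ℕ) := Sym2 (PSet N)

/-- `m` is an MI instance, i.e. an unordered pair of disjoint nonempty subsets of `⟦N⟧`. -/
def IsMIInst {N : ℕ} (m : MI N) : Prop :=
  ∃ Y Z : PSet N, m = s(Y, Z) ∧ Y.Nonempty ∧ Z.Nonempty ∧ Disjoint Y Z

/-- The MI-poset order: `{Y,Z} ⪯ {Y',Z'}` iff (`Y ⊆ Y'` and `Z ⊆ Z'`) or
(`Y ⊆ Z'` and `Z ⊆ Y'`).  (The two cases are absorbed by the existential over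
representatives of the unordered pairs.) -/
def MIle {N : ℕ} (m m' : MI N) : Prop :=
  ∃ Y Z Y' Z' : PSet N, m = s(Y, Z) ∧ m' = s(Y', Z') ∧ Y ⊆ Y' ∧ Z ⊆ Z'

/-- An `N`-party entropy vector, extended to all subsets of `⟦N⟧` by the purification
convention: `S ∅ = 0` and `S Y = S (⟦N⟧ \ Y)` whenever `0 ∈ Y`. -/
structure EntropyVec (N : ℕ) where
  S : PSet N → ℝ
  S_empty : S ∅ = 0
  S_purify : ∀ Y : PSet N, (0 : Party N) ∈ Y → S Y = S (Finset.univ \ Y)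

/-- Mutual information `I(Y:Z) = S_Y + S_Z - S_{Y∪Z}`. -/
def EntropyVec.I {N : ℕ} (v : EntropyVec N) (Y Z : PSet N) : ℝ :=
  v.S Y + v.S Z - v.S (Y ∪ Z)

/-- Membership in the subadditivity cone: `I(Y:Z) ≥ 0` for every MI instance. -/
def EntropyVec.InSAC {N : ℕ} (v : EntropyVec N) : Prop :=
  ∀ Y Z : PSet N, Y.Nonempty → Z.Nonempty → Disjoint Y Z → 0 ≤ v.I Y Z

/-- The pattern of marginal independence of `v`: the MI instances vanishing on `v`. -/
def EntropyVec.PMI {N : ℕ} (v : EntropyVec N) : Set (MI N) :=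
  {m | ∃ Y Z : PSet N, m = s(Y, Z) ∧ Y.Nonempty ∧ Z.Nonempty ∧ Disjoint Y Z ∧ v.I Y Z = 0}

/-- `P` is a down-set in the MI-poset. -/
def IsMIDownSet {N : ℕ} (P : Set (MI N)) : Prop :=
  ∀ m m' : MI N, IsMIInst m → m' ∈ P → MIle m m' → m ∈ P

/-- `P` is a KC-PMI: the PMI of some entropy vector in the subadditivity cone,
which moreover is a down-set in the MI-poset. -/
def IsKCPMI {N : ℕ} (P : Set (MI N)) : Prop :=
  (∃ v : EntropyVec N, v.InSAC ∧ P = v.PMI) ∧ IsMIDownSet P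

/-- The β-set of `X`: all MI instances `{Y,Z}` with `Y ∪ Z = X`. -/
def betaSet {N : ℕ} (X : PSet N) : Set (MI N) :=
  {m | ∃ Y Z : PSet N, m = s(Y, Z) ∧ Y.Nonempty ∧ Z.Nonempty ∧ Disjoint Y Z ∧ Y ∪ Z = X}

/-- The antichain `A` of minimal elements of `P̄ = M_N ∖ P`. -/
def minimalMI {N : ℕ} (P : Set (MI N)) : Set (MI N) :=
  {m | IsMIInst m ∧ m ∉ P ∧ ∀ m' : MI N, IsMIInst m' → m' ∉ P → MIle m' m → m' = m}

/-- `β(X)` is positive: `β(X) ⊆ P̄`. -/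
def BPos {N : ℕ} (P : Set (MI N)) (X : PSet N) : Prop :=
  ∀ m ∈ betaSet X, m ∉ P

/-- `β(X)` is vanishing: `β(X) ⊆ P`. -/
def BVan {N : ℕ} (P : Set (MI N)) (X : PSet N) : Prop :=
  betaSet X ⊆ P

/-- `β(X)` is partial: it has elements both in `P` and in `P̄`. -/
def BPart {N : ℕ} (P : Set (MI N)) (X : PSet N) : Prop :=
  (∃ m ∈ betaSet X, m ∈ P) ∧ (∃ m ∈ betaSet X, m ∉ P)

/-- `β(X)` is essential: `β(X) ∩ A ≠ ∅`. -/
def BEss {N : ℕ} (P : Set (MI N)) (X : PSet N) : Prop :=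
  ∃ m ∈ betaSet X, m ∈ minimalMI P

/-- `β(X)` is completely essential: `β(X) ⊆ A`. -/
def BCEss {N : ℕ} (P : Set (MI N)) (X : PSet N) : Prop :=
  betaSet X ⊆ minimalMI P

/-- `β(X)` is non-essential: `β(X) ∩ A = ∅`. -/
def BNEss {N : ℕ} (P : Set (MI N)) (X : PSet N) : Prop :=
  ∀ m ∈ betaSet X, m ∉ minimalMI P

/-- `pos_<(Y)`: the proper subsystems `Z ⊊ Y` with `|Z| ≥ 2` and `β(Z)` positive. -/
def posBelow {N : ℕ} (P : Set (MI N)) (Y : PSet N) : Set (PSet N) :=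
  {Z | Z ⊂ Y ∧ 2 ≤ Z.card ∧ BPos P Z}

/-- `Max(pos_<(Y))`: the inclusion-maximal elements of `pos_<(Y)`. -/
def maxPosBelow {N : ℕ} (P : Set (MI N)) (Y : PSet N) : Set (PSet N) :=
  {Z | Z ∈ posBelow P Y ∧ ∀ Z' ∈ posBelow P Y, Z ⊆ Z' → Z = Z'}

/-- The MI instance `m = {Y,Z}` splits `X` if `X ∩ Y ≠ ∅` and `X ∩ Z ≠ ∅`. -/
def Splits {N : ℕ} (m : MI N) (X : PSet N) : Prop :=
  ∃ Y Z : PSet N, m = s(Y, Z) ∧ (X ∩ Y).Nonempty ∧ (X ∩ Z).Nonempty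

/-- The hyperedges of the correlation hypergraph `H_P`: one hyperedge `e_X` for each
`X ⊆ ⟦N⟧` (with `|X| ≥ 2`) whose β-set is positive.  Vertices `v_ℓ` are identified
with the parties `ℓ ∈ ⟦N⟧`, and hyperedges with the corresponding subsystems. -/
def Hedge {N : ℕ} (P : Set (MI N)) : Set (PSet N) :=
  {X | 2 ≤ X.card ∧ BPos P X}

/-- The hyperedges of the sub-hypergraph `H_Y`: the hyperedges `e_Z` with `Z ⊊ Y`. -/
def subEdges {N : ℕ} (P : Set (MI N)) (Y : PSet N) : Set (PSet N) :=
  {Z | Z ⊂ Y ∧ Z ∈ Hedge P}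

/-- One step in a hypergraph with hyperedge set `E`: `a` and `b` lie in a common
hyperedge. -/
def hStep {N : ℕ} (E : Set (PSet N)) (a b : Party N) : Prop :=
  ∃ e ∈ E, a ∈ e ∧ b ∈ e

/-- Connectivity of the hypergraph with vertex set `V` and hyperedge set `E`:
every two vertices are joined by a path (a one-vertex hypergraph is connected). -/
def hConn {N : ℕ} (V : PSet N) (E : Set (PSet N)) : Prop :=
  ∀ a ∈ V, ∀ b ∈ V, Relation.ReflTransGen (hStep E) a b

/-- The vertex set of the connected component of `a` in the hypergraph with
vertex set `V` and hyperedge set `E`. -/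
def hComp {N : ℕ} (V : PSet N) (E : Set (PSet N)) (a : Party N) : Set (Party N) :=
  {b | b ∈ V ∧ Relation.ReflTransGen (hStep E) a b}

/-- A clique of the line graph `L_{H_P}`: a set of hyperedges of `H_P` which are
pairwise adjacent (distinct hyperedges being adjacent iff they intersect). -/
def IsLineClique {N : ℕ} (P : Set (MI N)) (Q : Set (PSet N)) : Prop :=
  Q ⊆ Hedge P ∧ ∀ e ∈ Q, ∀ f ∈ Q, e ≠ f → (e ∩ f).Nonempty

/-- A max-clique of the line graph `L_{H_P}`: a (nonempty) clique which is maximal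
under inclusion. -/
def IsMaxClique {N : ℕ} (P : Set (MI N)) (Q : Set (PSet N)) : Prop :=
  Q.Nonempty ∧ IsLineClique P Q ∧ ∀ Q' : Set (PSet N), IsLineClique P Q' → Q ⊆ Q' → Q = Q'

/-- `Q^∩`: the intersection of the hyperedges in `Q`, viewed as sets of vertices. -/
def qInter {N : ℕ} (Q : Set (PSet N)) : Set (Party N) :=
  {ℓ | ∀ e ∈ Q, ℓ ∈ e}

section Aux

variable {N : ℕ}

lemma I_comm (v : EntropyVec N) (Y Z : PSet N) : v.I Y Z = v.I Z Y := by
  unfold EntropyVec.I; rw [Finset.union_comm]; ring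

lemma I_empty_left (v : EntropyVec N) (Z : PSet N) : v.I ∅ Z = 0 := by
  unfold EntropyVec.I; rw [Finset.empty_union, v.S_empty]; ring

lemma I_empty_right (v : EntropyVec N) (Y : PSet N) : v.I Y ∅ = 0 := by
  rw [I_comm]; exact I_empty_left v Y

lemma I_of_mem_PMI (v : EntropyVec N) {Y Z : PSet N} (h : s(Y, Z) ∈ v.PMI) :
    v.I Y Z = 0 := by
  obtain ⟨U, V, heq, _, _, _, hI⟩ := h
  rw [Sym2.eq_iff] at heq
  rcases heq with ⟨rfl, rfl⟩ | ⟨rfl, rfl⟩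
  · exact hI
  · rw [I_comm]; exact hI

lemma mem_PMI_of_I (v : EntropyVec N) {Y Z : PSet N} (hY : Y.Nonempty) (hZ : Z.Nonempty)
    (hd : Disjoint Y Z) (h : v.I Y Z = 0) : s(Y, Z) ∈ v.PMI :=
  ⟨Y, Z, rfl, hY, hZ, hd, h⟩

lemma cross_zero (v : EntropyVec N) (hds : IsMIDownSet v.PMI) {W₁ W₂ : PSet N}
    (hW : s(W₁, W₂) ∈ v.PMI) (hd : Disjoint W₁ W₂) {X X' : PSet N}
    (hX : X ⊆ W₁) (hX' : X' ⊆ W₂) : v.I X X' = 0 := by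
  rcases X.eq_empty_or_nonempty with rfl | hne
  · exact I_empty_left v X'
  rcases X'.eq_empty_or_nonempty with rfl | hne'
  · exact I_empty_right v X
  have hdisj : Disjoint X X' := hd.mono hX hX'
  exact I_of_mem_PMI v
    (hds _ _ ⟨X, X', rfl, hne, hne', hdisj⟩ hW ⟨X, X', W₁, W₂, rfl, rfl, hX, hX'⟩)

lemma I_four (v : EntropyVec N) (A B C D : PSet N) :
    v.I (A ∪ B) (C ∪ D)
      = v.I A C + v.I B D + v.I (A ∪ C) (B ∪ D) - v.I A B - v.I C D := by
  unfold EntropyVec.I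
  have h : (A ∪ B) ∪ (C ∪ D) = (A ∪ C) ∪ (B ∪ D) := by
    ext x; simp only [Finset.mem_union]; tauto
  rw [h]; ring

lemma main_lemma (v : EntropyVec N) (hds : IsMIDownSet v.PMI) :
    ∀ Y : PSet N, (∃ w ∈ betaSet Y, w ∈ v.PMI) →
      ∀ Y₁ Y₂ : PSet N, Y₁.Nonempty → Y₂.Nonempty → Disjoint Y₁ Y₂ → Y₁ ∪ Y₂ = Y →
      (∀ Z : PSet N, Z ⊂ Y → 2 ≤ Z.card → BPos v.PMI Z →
        ¬((Z ∩ Y₁).Nonempty ∧ (Z ∩ Y₂).Nonempty)) →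
      v.I Y₁ Y₂ = 0 := by
  intro Y
  induction Y using Finset.strongInduction with
  | _ Y ih =>
  intro hw Y₁ Y₂ hY₁ hY₂ hdisj hunion hns
  obtain ⟨w, hwβ, hwP⟩ := hw
  obtain ⟨W₁, W₂, rfl, hW₁, hW₂, hWd, hWu⟩ := hwβ
  have hY₁Y : Y₁ ⊆ Y := hunion ▸ Finset.subset_union_left
  have hY₂Y : Y₂ ⊆ Y := hunion ▸ Finset.subset_union_right
  have hW₁Y : W₁ ⊆ Y := hWu ▸ Finset.subset_union_left
  have hW₂Y : W₂ ⊆ Y := hWu ▸ Finset.subset_union_right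
  have hW₁ss : W₁ ⊂ Y := by
    obtain ⟨x, hx⟩ := hW₂
    exact (Finset.ssubset_iff_of_subset hW₁Y).mpr
      ⟨x, hW₂Y hx, fun h => Finset.disjoint_left.mp hWd h hx⟩
  have hW₂ss : W₂ ⊂ Y := by
    obtain ⟨x, hx⟩ := hW₁
    exact (Finset.ssubset_iff_of_subset hW₂Y).mpr
      ⟨x, hW₁Y hx, fun h => Finset.disjoint_right.mp hWd h hx⟩
  have key : ∀ W : PSet N, W ⊂ Y → (Y₁ ∩ W) ∪ (Y₂ ∩ W) = W → v.I (Y₁ ∩ W) (Y₂ ∩ W) = 0 := by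
    intro W hWss hXu
    rcases (Y₁ ∩ W).eq_empty_or_nonempty with he | hne₁
    · rw [he]; exact I_empty_left v _
    rcases (Y₂ ∩ W).eq_empty_or_nonempty with he | hne₂
    · rw [he]; exact I_empty_right v _
    have hXd : Disjoint (Y₁ ∩ W) (Y₂ ∩ W) :=
      hdisj.mono Finset.inter_subset_left Finset.inter_subset_left
    have hcard : 2 ≤ W.card := by
      rw [← hXu, Finset.card_union_of_disjoint hXd]
      have h1 := Finset.card_pos.mpr hne₁
      have h2 := Finset.card_pos.mpr hne₂
      omega
    have hnotpos : ¬ BPos v.PMI W := by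
      intro hpos
      refine hns W hWss hcard hpos ⟨?_, ?_⟩
      · rw [Finset.inter_comm]; exact hne₁
      · rw [Finset.inter_comm]; exact hne₂
    unfold BPos at hnotpos
    push_neg at hnotpos
    obtain ⟨w', hw'β, hw'P⟩ := hnotpos
    refine ih W hWss ⟨w', hw'β, hw'P⟩ _ _ hne₁ hne₂ hXd hXu ?_
    intro Z hZss hZcard hZpos hsp
    refine hns Z (hZss.trans hWss) hZcard hZpos ⟨?_, ?_⟩
    · exact hsp.1.mono (Finset.inter_subset_inter Finset.Subset.rfl Finset.inter_subset_left)
    · exact hsp.2.mono (Finset.inter_subset_inter Finset.Subset.rfl Finset.inter_subset_left)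
  have hAB : (Y₁ ∩ W₁) ∪ (Y₁ ∩ W₂) = Y₁ := by
    rw [← Finset.inter_union_distrib_left, hWu, Finset.inter_eq_left]
    exact hY₁Y
  have hCD : (Y₂ ∩ W₁) ∪ (Y₂ ∩ W₂) = Y₂ := by
    rw [← Finset.inter_union_distrib_left, hWu, Finset.inter_eq_left]
    exact hY₂Y
  have hAC : (Y₁ ∩ W₁) ∪ (Y₂ ∩ W₁) = W₁ := by
    rw [← Finset.union_inter_distrib_right, hunion, Finset.inter_eq_right]
    exact hW₁Y
  have hBD : (Y₁ ∩ W₂) ∪ (Y₂ ∩ W₂) = W₂ := by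
    rw [← Finset.union_inter_distrib_right, hunion, Finset.inter_eq_right]
    exact hW₂Y
  have hxy := I_four v (Y₁ ∩ W₁) (Y₁ ∩ W₂) (Y₂ ∩ W₁) (Y₂ ∩ W₂)
  rw [hAB, hCD, hAC, hBD] at hxy
  rw [hxy, key W₁ hW₁ss hAC, key W₂ hW₂ss hBD, I_of_mem_PMI v hwP,
    cross_zero v hds hwP hWd Finset.inter_subset_right Finset.inter_subset_right,
    cross_zero v hds hwP hWd Finset.inter_subset_right Finset.inter_subset_right]
  ring

lemma splits_iff {U₁ U₂ X : PSet N} :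
    Splits s(U₁, U₂) X ↔ (X ∩ U₁).Nonempty ∧ (X ∩ U₂).Nonempty := by
  constructor
  · rintro ⟨V₁, V₂, heq, h1, h2⟩
    rw [Sym2.eq_iff] at heq
    rcases heq with ⟨h3, h4⟩ | ⟨h3, h4⟩
    · subst h3; subst h4; exact ⟨h1, h2⟩
    · subst h3; subst h4; exact ⟨h2, h1⟩
  · rintro ⟨h1, h2⟩; exact ⟨U₁, U₂, rfl, h1, h2⟩

lemma splits_mono {m : MI N} {X X' : PSet N} (h : X ⊆ X') : Splits m X → Splits m X' := by
  rintro ⟨U, V, heq, h1, h2⟩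
  exact ⟨U, V, heq, h1.mono (Finset.inter_subset_inter h Finset.Subset.rfl),
    h2.mono (Finset.inter_subset_inter h Finset.Subset.rfl)⟩

lemma exists_maxPos (P : Set (MI N)) (Y : PSet N) {Z : PSet N} (hZ : Z ∈ posBelow P Y) :
    ∃ Z', Z' ∈ maxPosBelow P Y ∧ Z ⊆ Z' := by
  obtain ⟨a, ⟨haP, haZ⟩, hmax⟩ := Set.Finite.exists_maximalFor id
    {Z' | Z' ∈ posBelow P Y ∧ Z ⊆ Z'} (Set.toFinite _) ⟨Z, hZ, Finset.Subset.refl Z⟩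
  refine ⟨a, ⟨haP, fun Z' hZ' hsub => ?_⟩, haZ⟩
  exact Finset.Subset.antisymm hsub (hmax ⟨hZ', haZ.trans hsub⟩ hsub)

end Aux

/-- For every KC-PMI `P`, subsystem `Y` whose β-set is essential or
partial, and MI instance `m ∈ β(Y)`:
(i) if `β(Y)` is partial, then `m ∈ P` iff `m` splits no element of `Max(pos_<(Y))`;
(ii) if `β(Y)` is essential, then `m ∈ A` iff `m` splits no element of `Max(pos_<(Y))`. -/
theorem statement12 {N : ℕ} (hN : 2 ≤ N) (P : Set (MI N)) (hP : IsKCPMI P)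
    (Y : PSet N) (hY : 2 ≤ Y.card) (hEP : BEss P Y ∨ BPart P Y)
    (m : MI N) (hm : m ∈ betaSet Y) :
    (BPart P Y → (m ∈ P ↔ ∀ Z ∈ maxPosBelow P Y, ¬ Splits m Z)) ∧
    (BEss P Y → (m ∈ minimalMI P ↔ ∀ Z ∈ maxPosBelow P Y, ¬ Splits m Z)) := by
  obtain ⟨⟨v, hv, rfl⟩, hds⟩ := hP
  obtain ⟨Y₁, Y₂, rfl, hY₁, hY₂, hdisj, hunion⟩ := hm
  -- converting "no maximal split" into "no positive proper split"
  have hns_iff : ∀ U₁ U₂ : PSet N, (∀ Z ∈ maxPosBelow v.PMI Y, ¬ Splits s(U₁, U₂) Z) →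
      ∀ Z : PSet N, Z ⊂ Y → 2 ≤ Z.card → BPos v.PMI Z →
        ¬((Z ∩ U₁).Nonempty ∧ (Z ∩ U₂).Nonempty) := by
    intro U₁ U₂ h Z hss hcard hpos hsp
    obtain ⟨Z', hZ', hsub⟩ := exists_maxPos v.PMI Y ⟨hss, hcard, hpos⟩
    exact h Z' hZ' (splits_mono hsub (splits_iff.mpr hsp))
  -- vanishing instances split no positive subsystem
  have easyP : s(Y₁, Y₂) ∈ v.PMI → ∀ Z ∈ posBelow v.PMI Y, ¬ Splits s(Y₁, Y₂) Z := by
    intro hmP Z hZ hsp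
    obtain ⟨hss, hcard, hpos⟩ := hZ
    rw [splits_iff] at hsp
    obtain ⟨h1, h2⟩ := hsp
    have hd' : Disjoint (Z ∩ Y₁) (Z ∩ Y₂) :=
      hdisj.mono Finset.inter_subset_right Finset.inter_subset_right
    have hu' : (Z ∩ Y₁) ∪ (Z ∩ Y₂) = Z := by
      rw [← Finset.inter_union_distrib_left, hunion, Finset.inter_eq_left]
      exact hss.subset
    have hmem : s(Z ∩ Y₁, Z ∩ Y₂) ∈ v.PMI :=
      hds _ _ ⟨_, _, rfl, h1, h2, hd'⟩ hmP
        ⟨_, _, Y₁, Y₂, rfl, rfl, Finset.inter_subset_right, Finset.inter_subset_right⟩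
    exact hpos _ ⟨_, _, rfl, h1, h2, hd', hu'⟩ hmem
  -- minimal instances split no positive subsystem
  have minNS : ∀ U₁ U₂ : PSet N, Disjoint U₁ U₂ → U₁ ∪ U₂ = Y →
      s(U₁, U₂) ∈ minimalMI v.PMI → ∀ Z ∈ posBelow v.PMI Y, ¬ Splits s(U₁, U₂) Z := by
    intro U₁ U₂ hUd hUu hmin Z hZ hsp
    obtain ⟨hss, hcard, hpos⟩ := hZ
    rw [splits_iff] at hsp
    obtain ⟨h1, h2⟩ := hsp
    have hd' : Disjoint (Z ∩ U₁) (Z ∩ U₂) :=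
      hUd.mono Finset.inter_subset_right Finset.inter_subset_right
    have hu' : (Z ∩ U₁) ∪ (Z ∩ U₂) = Z := by
      rw [← Finset.inter_union_distrib_left, hUu, Finset.inter_eq_left]
      exact hss.subset
    have hnp : s(Z ∩ U₁, Z ∩ U₂) ∉ v.PMI := hpos _ ⟨_, _, rfl, h1, h2, hd', hu'⟩
    have heq := hmin.2.2 _ ⟨_, _, rfl, h1, h2, hd'⟩ hnp
      ⟨_, _, U₁, U₂, rfl, rfl, Finset.inter_subset_right, Finset.inter_subset_right⟩
    rw [Sym2.eq_iff] at heq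
    have hYZ : Y ⊆ Z := by
      rw [← hUu]
      rcases heq with ⟨h3, h4⟩ | ⟨h3, h4⟩
      · exact Finset.union_subset (Finset.inter_eq_right.mp h3)
          (Finset.inter_eq_right.mp h4)
      · refine Finset.union_subset ?_ ?_
        · rw [← h4]; exact Finset.inter_subset_left
        · rw [← h3]; exact Finset.inter_subset_left
    exact (Finset.ssubset_def.mp hss).2 hYZ
  constructor
  · -- part (i): partial
    intro hpart
    constructor
    · intro hmP Z hZ
      exact easyP hmP Z hZ.1
    · intro hns
      obtain ⟨⟨w, hwβ, hwP⟩, -⟩ := hpart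
      exact mem_PMI_of_I v hY₁ hY₂ hdisj
        (main_lemma v hds Y ⟨w, hwβ, hwP⟩ Y₁ Y₂ hY₁ hY₂ hdisj hunion (hns_iff Y₁ Y₂ hns))
  · -- part (ii): essential
    intro hess
    obtain ⟨m₀, hm₀β, hm₀A⟩ := hess
    obtain ⟨U₁, U₂, rfl, hU₁, hU₂, hUd, hUu⟩ := hm₀β
    have hposY : ∀ w ∈ betaSet Y, w ∉ v.PMI := by
      intro w hwβ hwP
      have hm₀ns : ∀ Z : PSet N, Z ⊂ Y → 2 ≤ Z.card → BPos v.PMI Z →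
          ¬((Z ∩ U₁).Nonempty ∧ (Z ∩ U₂).Nonempty) := by
        intro Z hss hcard hpos hsp
        exact minNS U₁ U₂ hUd hUu hm₀A Z ⟨hss, hcard, hpos⟩ (splits_iff.mpr hsp)
      exact hm₀A.2.1 (mem_PMI_of_I v hU₁ hU₂ hUd
        (main_lemma v hds Y ⟨w, hwβ, hwP⟩ U₁ U₂ hU₁ hU₂ hUd hUu hm₀ns))
    constructor
    · intro hmA Z hZ
      exact minNS Y₁ Y₂ hdisj hunion hmA Z hZ.1
    · intro hns
      have hns' := hns_iff Y₁ Y₂ hns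
      refine ⟨⟨Y₁, Y₂, rfl, hY₁, hY₂, hdisj⟩,
        hposY _ ⟨Y₁, Y₂, rfl, hY₁, hY₂, hdisj, hunion⟩, ?_⟩
      intro m' hm'inst hm'nP hle
      obtain ⟨V₁, V₂, T₁, T₂, hm'eq, hmeq2, hV₁, hV₂⟩ := hle
      rw [Sym2.eq_iff] at hmeq2
      obtain ⟨W₁', W₂', hm'eq', hs1, hs2⟩ :
          ∃ W₁' W₂' : PSet N, m' = s(W₁', W₂') ∧ W₁' ⊆ Y₁ ∧ W₂' ⊆ Y₂ := by
        rcases hmeq2 with ⟨h3, h4⟩ | ⟨h3, h4⟩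
        · exact ⟨V₁, V₂, hm'eq, by rw [h3]; exact hV₁, by rw [h4]; exact hV₂⟩
        · exact ⟨V₂, V₁, by rw [hm'eq, Sym2.eq_swap], by rw [h3]; exact hV₂,
            by rw [h4]; exact hV₁⟩
      obtain ⟨E₁, E₂, hE, hE₁, hE₂, hEd⟩ := hm'inst
      rw [hm'eq'] at hE
      rw [Sym2.eq_iff] at hE
      obtain ⟨hW₁'ne, hW₂'ne, hW'd⟩ :
          W₁'.Nonempty ∧ W₂'.Nonempty ∧ Disjoint W₁' W₂' := by
        rcases hE with ⟨h3, h4⟩ | ⟨h3, h4⟩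
        · subst h3; subst h4; exact ⟨hE₁, hE₂, hEd⟩
        · subst h3; subst h4; exact ⟨hE₂, hE₁, hEd.symm⟩
      have hZY : W₁' ∪ W₂' ⊆ Y := by
        rw [← hunion]
        exact Finset.union_subset (hs1.trans Finset.subset_union_left)
          (hs2.trans Finset.subset_union_right)
      by_cases hZeq : W₁' ∪ W₂' = Y
      · have h1 : W₁' = Y₁ := by
          apply Finset.Subset.antisymm hs1
          intro y hy
          have hyY : y ∈ W₁' ∪ W₂' := by
            rw [hZeq, ← hunion]; exact Finset.mem_union_left _ hy
          rcases Finset.mem_union.mp hyY with h | h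
          · exact h
          · exact absurd hy (Finset.disjoint_right.mp hdisj (hs2 h))
        have h2 : W₂' = Y₂ := by
          apply Finset.Subset.antisymm hs2
          intro y hy
          have hyY : y ∈ W₁' ∪ W₂' := by
            rw [hZeq, ← hunion]; exact Finset.mem_union_right _ hy
          rcases Finset.mem_union.mp hyY with h | h
          · exact absurd hy (Finset.disjoint_left.mp hdisj (hs1 h))
          · exact h
        rw [hm'eq', h1, h2]
      · exfalso
        have hss : W₁' ∪ W₂' ⊂ Y := Finset.ssubset_iff_subset_ne.mpr ⟨hZY, hZeq⟩
        have hcard : 2 ≤ (W₁' ∪ W₂').card := by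
          rw [Finset.card_union_of_disjoint hW'd]
          have h1 := Finset.card_pos.mpr hW₁'ne
          have h2 := Finset.card_pos.mpr hW₂'ne
          omega
        have hnotpos : ¬ BPos v.PMI (W₁' ∪ W₂') := by
          intro hpos
          refine hns' _ hss hcard hpos ⟨?_, ?_⟩
          · exact hW₁'ne.mono (Finset.subset_inter Finset.subset_union_left hs1)
          · exact hW₂'ne.mono (Finset.subset_inter Finset.subset_union_right hs2)
        unfold BPos at hnotpos
        push_neg at hnotpos
        obtain ⟨w', hw'β, hw'P⟩ := hnotpos
        have hII := main_lemma v hds (W₁' ∪ W₂') ⟨w', hw'β, hw'P⟩ W₁' W₂'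
          hW₁'ne hW₂'ne hW'd rfl ?_
        · exact hm'nP (by rw [hm'eq']; exact mem_PMI_of_I v hW₁'ne hW₂'ne hW'd hII)
        · intro Z' hZ'ss hZ'card hZ'pos hsp
          refine hns' Z' (hZ'ss.trans hss) hZ'card hZ'pos ⟨?_, ?_⟩
          · exact hsp.1.mono (Finset.inter_subset_inter Finset.Subset.rfl hs1)
          · exact hsp.2.mono (Finset.inter_subset_inter Finset.Subset.rfl hs2)

end HEC
end

section
/- For every N ≥ 2, every KC-PMI P on N parties, and every subsystem Y ⊆ ⟦N⟧ with |Y| ≥ 2: β(Y) is positive and non-essential if and only if |Y| > 2 and the sub-hypergraph H_Y of the correlation hypergraph H_P is connected. -/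
namespace HEC

/-!
A bipartition `Y = A ⊔ B` is an element `{A, B}` of `β(Y)`, and `H_Y` is connected iff every
such bipartition is crossed by a hyperedge of `H_Y`. So it suffices to show that `{A, B}` lies in
`P̄` without being minimal there iff some positive `β(Z)` with `Z ⊊ Y` meets both `A` and `B`.
Such a `Z` gives `{Z ∩ A, Z ∩ B} ∈ P̄` strictly below `{A, B}`. Conversely, if `{A₂, B₂} ∈ P̄` lies
strictly below `{A, B}`, then `I(A₂ : B₂) > 0`. Whenever `β(A₂ ∪ B₂)` is not positive, pick
`{C, D} ∈ β(A₂ ∪ B₂) ∩ P`; since `P` is a down-set,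
`I(A₂ : B₂) = I(C ∩ A₂ : C ∩ B₂) + I(D ∩ A₂ : D ∩ B₂)`, so one of the two terms is positive and
we may descend to a smaller system. The descent ends at `A' ⊆ A₂`, `B' ⊆ B₂` with `β(A' ∪ B')`
positive, and `Z = A' ∪ B'` crosses `{A, B}`.
-/

section

variable {N : ℕ}

open Finset

lemma isMIInst_mk_iff {A B : PSet N} :
    IsMIInst s(A, B) ↔ A.Nonempty ∧ B.Nonempty ∧ Disjoint A B := by
  constructor
  · rintro ⟨Y, Z, h, hY, hZ, hYZ⟩
    rcases Sym2.eq_iff.mp h with ⟨rfl, rfl⟩ | ⟨rfl, rfl⟩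
    · exact ⟨hY, hZ, hYZ⟩
    · exact ⟨hZ, hY, hYZ.symm⟩
  · rintro ⟨hA, hB, hAB⟩
    exact ⟨A, B, rfl, hA, hB, hAB⟩

lemma union_eq_union_of_mk_eq {A B C D : PSet N} (h : s(A, B) = s(C, D)) :
    A ∪ B = C ∪ D := by
  rcases Sym2.eq_iff.mp h with ⟨rfl, rfl⟩ | ⟨rfl, rfl⟩
  · rfl
  · exact union_comm _ _

lemma exists_mk_eq_of_MIle {m : MI N} {A B : PSet N} (h : MIle m s(A, B)) :
    ∃ A' ⊆ A, ∃ B' ⊆ B, m = s(A', B') := by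
  obtain ⟨Y, Z, Y', Z', rfl, h, hY, hZ⟩ := h
  rcases Sym2.eq_iff.mp h with ⟨rfl, rfl⟩ | ⟨rfl, rfl⟩
  · exact ⟨Y, hY, Z, hZ, rfl⟩
  · exact ⟨Z, hZ, Y, hY, Sym2.eq_swap⟩

lemma union_ssubset_union_of_mk_ne {A B A' B' : PSet N} (hAB : Disjoint A B) (hA : A' ⊆ A)
    (hB : B' ⊆ B) (hne : s(A', B') ≠ s(A, B)) : A' ∪ B' ⊂ A ∪ B := by
  refine (union_subset_union hA hB).ssubset_of_ne fun h => hne ?_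
  have hA' : A ⊆ A' := fun x hx =>
    (mem_union.mp (h ▸ mem_union_left B hx)).resolve_right
      fun hxB => disjoint_left.mp hAB hx (hB hxB)
  have hB' : B ⊆ B' := fun x hx =>
    (mem_union.mp (h ▸ mem_union_right A hx)).resolve_left
      fun hxA => disjoint_right.mp hAB hx (hA hxA)
  rw [hA.antisymm hA', hB.antisymm hB']

lemma BPos_and_BNEss_iff {P : Set (MI N)} {Y : PSet N} :
    BPos P Y ∧ BNEss P Y ↔ ∀ A B : PSet N, Disjoint A B → A ∪ B = Y → A.Nonempty →
      B.Nonempty → s(A, B) ∉ P ∧ s(A, B) ∉ minimalMI P := by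
  constructor
  · rintro ⟨hpos, hness⟩ A B hAB hU hA hB
    have hβ : s(A, B) ∈ betaSet Y := ⟨A, B, rfl, hA, hB, hAB, hU⟩
    exact ⟨hpos _ hβ, hness _ hβ⟩
  · intro h
    constructor <;> rintro _ ⟨A, B, rfl, hA, hB, hAB, hU⟩
    exacts [(h A B hAB hU hA hB).1, (h A B hAB hU hA hB).2]

lemma hConn_iff_forall_exists_cross {V : PSet N} {E : Set (PSet N)} (hE : ∀ e ∈ E, e ⊆ V) :
    hConn V E ↔ ∀ A B : PSet N, Disjoint A B → A ∪ B = V → A.Nonempty → B.Nonempty →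
      ∃ e ∈ E, (e ∩ A).Nonempty ∧ (e ∩ B).Nonempty := by
  constructor
  · intro hconn A B hAB hU ⟨a, ha⟩ ⟨b, hb⟩
    by_contra! hno
    have hreach : ∀ c, Relation.ReflTransGen (hStep E) a c → c ∈ A := by
      intro c hc
      induction hc with
      | refl => exact ha
      | @tail c' c _ hstep ih =>
        obtain ⟨e, he, hc'e, hce⟩ := hstep
        rcases mem_union.mp (hU ▸ hE e he hce) with hcA | hcB
        · exact hcA
        · exact absurd (hno e he ⟨c', mem_inter.mpr ⟨hc'e, ih⟩⟩)
            (ne_empty_of_mem (mem_inter.mpr ⟨hce, hcB⟩))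
    exact disjoint_left.mp hAB (hreach b (hconn a (hU ▸ mem_union_left B ha) b
      (hU ▸ mem_union_right A hb))) hb
  · intro hcross a ha b hb
    classical
    by_contra hab
    set A := V.filter (Relation.ReflTransGen (hStep E) a)
    obtain ⟨e, he, ⟨c, hc⟩, ⟨d, hd⟩⟩ := hcross A (V \ A) disjoint_sdiff
      (union_sdiff_of_subset (filter_subset _ _)) ⟨a, mem_filter.mpr ⟨ha, .refl⟩⟩
      ⟨b, mem_sdiff.mpr ⟨hb, fun hbA => hab (mem_filter.mp hbA).2⟩⟩
    rw [mem_inter, mem_filter] at hc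
    rw [mem_inter, mem_sdiff, mem_filter] at hd
    exact hd.2.2 ⟨hd.2.1, hc.2.2.tail ⟨e, he, hc.1, hd.1⟩⟩

lemma two_lt_card_of_hConn_subEdges {P : Set (MI N)} {Y : PSet N} (hY : 2 ≤ Y.card)
    (h : hConn Y (subEdges P Y)) : 2 < Y.card := by
  obtain ⟨a, ha, b, hb, hab⟩ := one_lt_card.mp hY
  obtain ⟨-, ⟨e, ⟨heY, he, -⟩, -⟩, -⟩ := (h a ha b hb).cases_head.resolve_left hab
  exact he.trans_lt (card_lt_card heY)

namespace EntropyVec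

variable (v : EntropyVec N)

lemma I_empty_left (B : PSet N) : v.I ∅ B = 0 := by
  rw [I, empty_union, v.S_empty, zero_add, sub_self]

lemma I_empty_right (A : PSet N) : v.I A ∅ = 0 := by
  rw [I, union_empty, v.S_empty, add_zero, sub_self]

/-- Both sides equal `S_{C∩A} + S_{C∩B} + S_{D∩A} + S_{D∩B} - S_{A∪B}`. -/
lemma I_add_I_add_I_eq {A B C D : PSet N} (h : A ∪ B = C ∪ D) :
    v.I A B + v.I (C ∩ A) (D ∩ A) + v.I (C ∩ B) (D ∩ B) =
      v.I (C ∩ A) (C ∩ B) + v.I (D ∩ A) (D ∩ B) + v.I C D := by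
  have hC : C ∩ A ∪ C ∩ B = C := by
    rw [← inter_union_distrib_left, h, inter_eq_left.mpr subset_union_left]
  have hD : D ∩ A ∪ D ∩ B = D := by
    rw [← inter_union_distrib_left, h, inter_eq_left.mpr subset_union_right]
  have hA : C ∩ A ∪ D ∩ A = A := by
    rw [← union_inter_distrib_right, ← h, inter_eq_right.mpr subset_union_left]
  have hB : C ∩ B ∪ D ∩ B = B := by
    rw [← union_inter_distrib_right, ← h, inter_eq_right.mpr subset_union_right]
  simp only [I, hA, hB, hC, hD, h]
  ring

variable {v}

lemma nonempty_of_I_pos {A B : PSet N} (h : 0 < v.I A B) : A.Nonempty ∧ B.Nonempty := by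
  simp only [nonempty_iff_ne_empty]
  constructor <;> rintro rfl <;> simp [I_empty_left, I_empty_right] at h

lemma mk_mem_PMI_iff {A B : PSet N} :
    s(A, B) ∈ v.PMI ↔ A.Nonempty ∧ B.Nonempty ∧ Disjoint A B ∧ v.I A B = 0 := by
  constructor
  · rintro ⟨Y, Z, h, hY, hZ, hYZ, hI⟩
    rcases Sym2.eq_iff.mp h with ⟨rfl, rfl⟩ | ⟨rfl, rfl⟩
    · exact ⟨hY, hZ, hYZ, hI⟩
    · refine ⟨hZ, hY, hYZ.symm, ?_⟩
      rwa [I, add_comm, union_comm]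
  · rintro ⟨hA, hB, hAB, hI⟩
    exact ⟨A, B, rfl, hA, hB, hAB, hI⟩

lemma InSAC.mk_notMem_PMI_iff (hv : v.InSAC) {A B : PSet N} (hA : A.Nonempty)
    (hB : B.Nonempty) (hAB : Disjoint A B) : s(A, B) ∉ v.PMI ↔ 0 < v.I A B := by
  rw [mk_mem_PMI_iff, (hv A B hA hB hAB).lt_iff_ne']
  tauto

lemma I_eq_zero_of_subset (hds : IsMIDownSet v.PMI) {A B A' B' : PSet N}
    (hm : s(A, B) ∈ v.PMI) (hA : A' ⊆ A) (hB : B' ⊆ B) : v.I A' B' = 0 := by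
  obtain ⟨-, -, hAB, -⟩ := mk_mem_PMI_iff.mp hm
  rcases A'.eq_empty_or_nonempty with rfl | hA'
  · exact v.I_empty_left B'
  rcases B'.eq_empty_or_nonempty with rfl | hB'
  · exact v.I_empty_right A'
  exact (mk_mem_PMI_iff.mp (hds _ _ (isMIInst_mk_iff.mpr ⟨hA', hB', hAB.mono hA hB⟩) hm
    ⟨A', B', A, B, rfl, rfl, hA, hB⟩)).2.2.2

lemma exists_BPos_of_I_pos (hds : IsMIDownSet v.PMI) {A B : PSet N} (hI : 0 < v.I A B) :
    ∃ A' ⊆ A, ∃ B' ⊆ B, 0 < v.I A' B' ∧ BPos v.PMI (A' ∪ B') := by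
  induction hn : (A ∪ B).card using Nat.strong_induction_on generalizing A B with | _ n ih
  by_cases hpos : BPos v.PMI (A ∪ B)
  · exact ⟨A, subset_rfl, B, subset_rfl, hI, hpos⟩
  obtain ⟨_, ⟨C, D, rfl, hC, hD, hCD, hU⟩, hm⟩ : ∃ m ∈ betaSet (A ∪ B), m ∈ v.PMI := by
    simpa [BPos] using hpos
  have descend : ∀ X ⊂ A ∪ B, 0 < v.I (X ∩ A) (X ∩ B) →
      ∃ A' ⊆ A, ∃ B' ⊆ B, 0 < v.I A' B' ∧ BPos v.PMI (A' ∪ B') := by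
    intro X hX hIX
    obtain ⟨A', hA', B', hB', h⟩ := ih _ (hn ▸ card_lt_card
      ((union_subset inter_subset_left inter_subset_left).trans_ssubset hX)) hIX rfl
    exact ⟨A', hA'.trans inter_subset_right, B', hB'.trans inter_subset_right, h⟩
  have hsplit := v.I_add_I_add_I_eq hU.symm
  rw [I_eq_zero_of_subset hds hm inter_subset_left inter_subset_left,
    I_eq_zero_of_subset hds hm inter_subset_left inter_subset_left,
    I_eq_zero_of_subset hds hm subset_rfl subset_rfl] at hsplit
  rcases lt_or_ge 0 (v.I (C ∩ A) (C ∩ B)) with hIC | hIC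
  · refine descend C ?_ hIC
    rw [← hU]
    exact left_lt_sup.mpr fun hDC => hD.ne_empty (hCD.symm.eq_bot_of_le hDC)
  · refine descend D ?_ (by linarith)
    rw [← hU]
    exact right_lt_sup.mpr fun hCD' => hC.ne_empty (hCD.eq_bot_of_le hCD')

end EntropyVec

open EntropyVec in
theorem mk_notMem_and_notMem_minimalMI_iff {v : EntropyVec N} (hv : v.InSAC)
    (hds : IsMIDownSet v.PMI) {A B Y : PSet N} (hA : A.Nonempty) (hB : B.Nonempty)
    (hAB : Disjoint A B) (hU : A ∪ B = Y) :
    s(A, B) ∉ v.PMI ∧ s(A, B) ∉ minimalMI v.PMI ↔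
      ∃ Z ∈ subEdges v.PMI Y, (Z ∩ A).Nonempty ∧ (Z ∩ B).Nonempty := by
  subst hU
  constructor
  · rintro ⟨hm, hnmin⟩
    obtain ⟨_, hm', hmP, hle, hne⟩ :
        ∃ m, IsMIInst m ∧ m ∉ v.PMI ∧ MIle m s(A, B) ∧ m ≠ s(A, B) := by
      simpa [minimalMI, isMIInst_mk_iff.mpr ⟨hA, hB, hAB⟩, hm] using hnmin
    obtain ⟨A₂, hA₂, B₂, hB₂, rfl⟩ := exists_mk_eq_of_MIle hle
    obtain ⟨hA₂ne, hB₂ne, hAB₂⟩ := isMIInst_mk_iff.mp hm'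
    obtain ⟨A', hA', B', hB', hI', hpos⟩ :=
      exists_BPos_of_I_pos hds ((hv.mk_notMem_PMI_iff hA₂ne hB₂ne hAB₂).mp hmP)
    obtain ⟨⟨a, ha⟩, ⟨b, hb⟩⟩ := nonempty_of_I_pos hI'
    have hcard : 2 ≤ (A' ∪ B').card := by
      rw [card_union_of_disjoint (hAB₂.mono hA' hB')]
      have := card_pos.mpr ⟨a, ha⟩
      have := card_pos.mpr ⟨b, hb⟩
      omega
    refine ⟨A' ∪ B', ⟨?_, hcard, hpos⟩, ⟨a, ?_⟩, ⟨b, ?_⟩⟩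
    · exact (union_subset_union hA' hB').trans_ssubset
        (union_ssubset_union_of_mk_ne hAB hA₂ hB₂ hne)
    · exact mem_inter.mpr ⟨mem_union_left _ ha, hA₂ (hA' ha)⟩
    · exact mem_inter.mpr ⟨mem_union_right _ hb, hB₂ (hB' hb)⟩
  · rintro ⟨Z, ⟨hZY, -, hZpos⟩, hZA, hZB⟩
    have hZ : Z ∩ A ∪ Z ∩ B = Z := by
      rw [← inter_union_distrib_left, inter_eq_left.mpr hZY.subset]
    have hdisj : Disjoint (Z ∩ A) (Z ∩ B) := hAB.mono inter_subset_right inter_subset_right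
    have hinst : IsMIInst s(Z ∩ A, Z ∩ B) := isMIInst_mk_iff.mpr ⟨hZA, hZB, hdisj⟩
    have hZm : s(Z ∩ A, Z ∩ B) ∉ v.PMI := hZpos _ ⟨_, _, rfl, hZA, hZB, hdisj, hZ⟩
    have hle : MIle s(Z ∩ A, Z ∩ B) s(A, B) :=
      ⟨_, _, _, _, rfl, rfl, inter_subset_right, inter_subset_right⟩
    refine ⟨fun hm => hZm (hds _ _ hinst hm hle), fun hmin => hZY.ne ?_⟩
    rw [← hZ]
    exact union_eq_union_of_mk_eq (hmin.2.2 _ hinst hZm hle)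

end

theorem statement13_general {N : ℕ} (P : Set (MI N)) (hP : IsKCPMI P)
    (Y : PSet N) (hY : 2 ≤ Y.card) :
    (BPos P Y ∧ BNEss P Y) ↔ (2 < Y.card ∧ hConn Y (subEdges P Y)) := by
  obtain ⟨⟨v, hv, rfl⟩, hds⟩ := hP
  have hconn_iff :=
    hConn_iff_forall_exists_cross (E := subEdges v.PMI Y) fun _ he => he.1.subset
  rw [BPos_and_BNEss_iff]
  constructor
  · intro h
    have hconn := hconn_iff.mpr fun A B hAB hU hA hB =>
      (mk_notMem_and_notMem_minimalMI_iff hv hds hA hB hAB hU).mp (h A B hAB hU hA hB)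
    exact ⟨two_lt_card_of_hConn_subEdges hY hconn, hconn⟩
  · rintro ⟨-, hconn⟩ A B hAB hU hA hB
    exact (mk_notMem_and_notMem_minimalMI_iff hv hds hA hB hAB hU).mpr
      (hconn_iff.mp hconn A B hAB hU hA hB)

/-- For every KC-PMI `P` and subsystem `Y` with `|Y| ≥ 2`: `β(Y)` is
positive and non-essential iff `|Y| > 2` and the sub-hypergraph `H_Y` of the
correlation hypergraph `H_P` is connected. -/
theorem statement13 {N : ℕ} (hN : 2 ≤ N) (P : Set (MI N)) (hP : IsKCPMI P)
    (Y : PSet N) (hY : 2 ≤ Y.card) :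
    (BPos P Y ∧ BNEss P Y) ↔ (2 < Y.card ∧ hConn Y (subEdges P Y)) :=
  statement13_general P hP Y hY

end HEC
end
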